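/- arXiv:2511.04117 — 3 statements merged into one kernel-verified Lean document; each statement's English description precedes it below -/
import Mathlib

section
/- Let V be a real normed vector space, let p be a natural number, and let c ∈ V. Suppose E : ℕ → ℝ → V satisfies E 0 h = 0 for all h, and for every natural number m there exist a function A_m from ℝ to continuous linear endomorphisms of V and a function R_m : ℝ → V such that ‖A_m(h)‖ = O(h) and R_m(h) = O(h^{p+2}) as h → 0⁺, and E_{m+1}(h) = E_m(h) + A_m(h)(E_m(h)) + h^{p+1} • c + R_m(h) for all h. Then for every natural number m, the function h ↦ E_m(h) − (m • h^{p+1}) • c is O(h^{p+2}) as h → 0⁺. -/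
open Asymptotics Filter
open scoped Topology

theorem accumulated_error
    {V : Type*} [NormedAddCommGroup V] [NormedSpace ℝ V]
    (p : ℕ) (c : V) (E : ℕ → ℝ → V)
    (hE0 : ∀ h : ℝ, E 0 h = 0)
    (hstep : ∀ m : ℕ, ∃ (A : ℝ → (V →L[ℝ] V)) (R : ℝ → V),
      ((fun h : ℝ => ‖A h‖) =O[𝓝[>] (0:ℝ)] (fun h : ℝ => h)) ∧
      (R =O[𝓝[>] (0:ℝ)] (fun h : ℝ => h ^ (p + 2))) ∧
      (∀ h : ℝ, E (m + 1) h = E m h + A h (E m h) + h ^ (p + 1) • c + R h)) :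
    ∀ m : ℕ,
      (fun h : ℝ => E m h - (m • h ^ (p + 1)) • c) =O[𝓝[>] (0:ℝ)]
        (fun h : ℝ => h ^ (p + 2)) := by
  have hpow : (fun h : ℝ => h ^ (p + 2)) =O[𝓝[>] (0:ℝ)] fun h : ℝ => h ^ (p + 1) := by
    apply IsBigO.of_bound 1
    filter_upwards [Ioo_mem_nhdsGT_of_mem (by norm_num : (0:ℝ) ∈ Set.Ico 0 1)] with h hh
    have h0 : 0 < h := hh.1
    have h1 : h ≤ 1 := le_of_lt hh.2
    simp only [Real.norm_eq_abs, abs_pow, abs_of_pos h0, one_mul]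
    calc h ^ (p + 2) = h ^ (p + 1) * h := by ring
    _ ≤ h ^ (p + 1) * 1 := by
        exact mul_le_mul_of_nonneg_left h1 (pow_nonneg h0.le _)
    _ = h ^ (p + 1) := by ring
  intro m
  induction m with
  | zero =>
    have : (fun h : ℝ => E 0 h - ((0 : ℕ) • h ^ (p + 1)) • c) = fun _ => (0 : V) := by
      funext h; simp [hE0]
    rw [this]
    exact isBigO_zero _ _
  | succ m ih =>
    obtain ⟨A, R, hA, hR, heq⟩ := hstep m
    have hEm : (fun h : ℝ => E m h) =O[𝓝[>] (0:ℝ)] fun h : ℝ => h ^ (p + 1) := by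
      have h2 : (fun h : ℝ => ((m : ℕ) • h ^ (p + 1)) • c) =O[𝓝[>] (0:ℝ)]
          fun h : ℝ => h ^ (p + 1) := by
        apply IsBigO.of_bound ((m : ℝ) * ‖c‖)
        filter_upwards with h
        simp only [nsmul_eq_mul, norm_smul, Real.norm_eq_abs, abs_mul, abs_pow,
          Nat.abs_cast]
        ring_nf
        exact le_refl _
      have := (ih.trans hpow).add h2
      simpa using this
    have hAE : (fun h : ℝ => A h (E m h)) =O[𝓝[>] (0:ℝ)] fun h : ℝ => h ^ (p + 2) := by
      have hb : (fun h : ℝ => A h (E m h)) =O[𝓝[>] (0:ℝ)]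
          fun h : ℝ => ‖A h‖ * ‖E m h‖ := by
        apply IsBigO.of_bound 1
        filter_upwards with h
        simpa using (A h).le_opNorm (E m h)
      have hmul := hA.mul hEm.norm_left
      refine hb.trans (hmul.congr_right ?_)
      intro h; ring
    have key : (fun h : ℝ => E (m + 1) h - (((m + 1) : ℕ) • h ^ (p + 1)) • c) =
        fun h : ℝ => (E m h - ((m : ℕ) • h ^ (p + 1)) • c) + A h (E m h) + R h := by
      funext h
      rw [heq h]
      simp [succ_nsmul, add_smul]
      abel
    rw [key]
    exact (ih.add hAE).add hR
end

section
/- Let V be a real normed vector space, let p be a natural number, let m be a positive natural number, and let cH, cT ∈ V with cT ≠ 0. Suppose u, v : ℝ → V satisfy, as h → 0⁺, u(h) = ((m·h)^{p+1}) • cH + O(h^{p+2}) and v(h) = (m · h^{p+1}) • cT + O(h^{p+2}). Then the ratio ‖u(h)‖ / ‖v(h)‖ tends to m^p · ‖cH‖ / ‖cT‖ as h → 0⁺. -/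
open Asymptotics Filter
open scoped Topology

private lemma scaled_tendsto_aux
    {V : Type*} [NormedAddCommGroup V] [NormedSpace ℝ V]
    (p : ℕ) {f : ℝ → V} {L : V}
    (hf : (fun h : ℝ => f h - (h ^ (p + 1)) • L) =O[𝓝[>] (0:ℝ)]
      (fun h : ℝ => h ^ (p + 2))) :
    Tendsto (fun h : ℝ => (h ^ (p + 1))⁻¹ • f h) (𝓝[>] (0:ℝ)) (𝓝 L) := by
  have hO : (fun h : ℝ => (h ^ (p + 1))⁻¹ • (f h - (h ^ (p + 1)) • L))
      =O[𝓝[>] (0:ℝ)] (fun h : ℝ => (h ^ (p + 1))⁻¹ * h ^ (p + 2)) :=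
    (isBigO_refl (fun h : ℝ => (h ^ (p + 1))⁻¹) _).smul hf
  have hO2 : (fun h : ℝ => (h ^ (p + 1))⁻¹ • (f h - (h ^ (p + 1)) • L))
      =O[𝓝[>] (0:ℝ)] (fun h : ℝ => h) := by
    refine hO.trans (IsBigO.of_bound 1 ?_)
    filter_upwards [self_mem_nhdsWithin] with h (hh : 0 < h)
    have hne : h ^ (p + 1) ≠ 0 := pow_ne_zero _ hh.ne'
    rw [show h ^ (p + 2) = h ^ (p + 1) * h by ring, ← mul_assoc,
      inv_mul_cancel₀ hne, one_mul]
    simp [abs_of_pos hh]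
  have h0 : Tendsto (fun h : ℝ => (h ^ (p + 1))⁻¹ • (f h - (h ^ (p + 1)) • L))
      (𝓝[>] (0:ℝ)) (𝓝 0) :=
    hO2.trans_tendsto (tendsto_id.mono_left nhdsWithin_le_nhds)
  have heq : ∀ᶠ h in 𝓝[>] (0:ℝ),
      (h ^ (p + 1))⁻¹ • (f h - (h ^ (p + 1)) • L) + L = (h ^ (p + 1))⁻¹ • f h := by
    filter_upwards [self_mem_nhdsWithin] with h (hh : 0 < h)
    have hne : h ^ (p + 1) ≠ 0 := pow_ne_zero _ hh.ne'
    rw [smul_sub, smul_smul, inv_mul_cancel₀ hne, one_smul]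
    abel
  have := (h0.add_const L).congr' heq
  simpa using this

theorem error_ratio_limit
    {V : Type*} [NormedAddCommGroup V] [NormedSpace ℝ V]
    (p : ℕ) (m : ℕ) (hm : 0 < m) (cH cT : V) (hcT : cT ≠ 0)
    (u v : ℝ → V)
    (hu : (fun h : ℝ => u h - ((m * h) ^ (p + 1)) • cH) =O[𝓝[>] (0:ℝ)]
      (fun h : ℝ => h ^ (p + 2)))
    (hv : (fun h : ℝ => v h - ((m : ℝ) * h ^ (p + 1)) • cT) =O[𝓝[>] (0:ℝ)]
      (fun h : ℝ => h ^ (p + 2))) :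
    Filter.Tendsto (fun h : ℝ => ‖u h‖ / ‖v h‖) (𝓝[>] (0:ℝ))
      (𝓝 ((m : ℝ) ^ p * ‖cH‖ / ‖cT‖)) := by
  have hA : Tendsto (fun h : ℝ => (h ^ (p + 1))⁻¹ • u h) (𝓝[>] (0:ℝ))
      (𝓝 (((m : ℝ) ^ (p + 1)) • cH)) := by
    apply scaled_tendsto_aux p
    convert hu using 2 with h
    rw [smul_smul, mul_pow]
    ring_nf
  have hB : Tendsto (fun h : ℝ => (h ^ (p + 1))⁻¹ • v h) (𝓝[>] (0:ℝ))
      (𝓝 ((m : ℝ) • cT)) := by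
    apply scaled_tendsto_aux p
    convert hv using 2 with h
    rw [smul_smul]
    ring_nf
  have hm' : (m : ℝ) ≠ 0 := Nat.cast_ne_zero.mpr hm.ne'
  have hBne : ‖(m : ℝ) • cT‖ ≠ 0 := by
    simp [norm_smul, hm', hcT, norm_eq_zero]
  have hdiv := (hA.norm.div hB.norm hBne)
  have heq : ∀ᶠ h in 𝓝[>] (0:ℝ),
      ‖(h ^ (p + 1))⁻¹ • u h‖ / ‖(h ^ (p + 1))⁻¹ • v h‖ = ‖u h‖ / ‖v h‖ := by
    filter_upwards [self_mem_nhdsWithin] with h (hh : 0 < h)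
    have hpos : (0:ℝ) < (h ^ (p + 1))⁻¹ := by positivity
    rw [norm_smul, norm_smul, Real.norm_eq_abs, abs_of_pos hpos,
      mul_div_mul_left _ _ hpos.ne']
  have : ‖((m : ℝ) ^ (p + 1)) • cH‖ / ‖(m : ℝ) • cT‖
      = (m : ℝ) ^ p * ‖cH‖ / ‖cT‖ := by
    rw [norm_smul, norm_smul, Real.norm_eq_abs, Real.norm_eq_abs,
      abs_of_pos (by positivity : (0:ℝ) < (m:ℝ) ^ (p+1)),
      abs_of_pos (by exact_mod_cast hm : (0:ℝ) < (m:ℝ))]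
    rw [pow_succ, show (m:ℝ) ^ p * (m:ℝ) * ‖cH‖ = (m:ℝ) * ((m:ℝ) ^ p * ‖cH‖) by ring,
      mul_div_mul_left _ _ hm']
  rw [← this]
  exact hdiv.congr' heq
end

section
/- Let E be a real normed vector space, let f, g, σ : ℝ → ℝ, let ε_c, ε_∅ : E → ℝ → E, let ω ∈ ℝ, and define Δε(x, t) := ε_c(x, t) − ε_∅(x, t). Fix t ∈ ℝ and suppose xT, xH : ℝ → E satisfy: xT has derivative f(t) • xT(t) + (g(t)² / (2·σ(t))) • ε_c(xT(t) + xH(t), t) at t, and xH has derivative f(t) • xH(t) + ((g(t)² / (2·σ(t))) · (ω − 1)) • Δε(xT(t) + xH(t), t) at t. Then the function x := xT + xH has derivative f(t) • x(t) + (g(t)² / (2·σ(t))) • (ε_∅(x(t), t) + ω • Δε(x(t), t)) at t. -/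
theorem cfg_drift_eq_tortoise_drift_add_hare_drift {R M : Type*} [CommRing R] [AddCommGroup M]
    [Module R M] (a c ω : R) (u v e₀ e₁ : M) :
    a • (u + v) + c • (e₀ + ω • (e₁ - e₀)) =
      (a • u + c • e₁) + (a • v + (c * (ω - 1)) • (e₁ - e₀)) := by
  module

theorem cfg_multirate_splitting
    {E : Type*} [NormedAddCommGroup E] [NormedSpace ℝ E]
    (f g σ : ℝ → ℝ) (εc ε0 : E → ℝ → E) (ω : ℝ)
    (Δε : E → ℝ → E) (hΔε : ∀ x s, Δε x s = εc x s - ε0 x s)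
    (t : ℝ) (xT xH : ℝ → E)
    (hT : HasDerivAt xT
      (f t • xT t + (g t ^ 2 / (2 * σ t)) • εc (xT t + xH t) t) t)
    (hH : HasDerivAt xH
      (f t • xH t + ((g t ^ 2 / (2 * σ t)) * (ω - 1)) • Δε (xT t + xH t) t) t) :
    HasDerivAt (fun s => xT s + xH s)
      (f t • (xT t + xH t) + (g t ^ 2 / (2 * σ t)) •
        (ε0 (xT t + xH t) t + ω • Δε (xT t + xH t) t)) t := by
  rw [hΔε] at hH ⊢
  rw [cfg_drift_eq_tortoise_drift_add_hare_drift]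
  exact hT.add hH
end
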